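/- (Lindeberg condition.) Assume Re(Φ_1) < 1/2 and set v_n = Σ_{k=1}^{n−1} 1/|a_{k+1}|². Then for every ε > 0, (1/v_n) · Σ_{k=1}^{n−1} E( |ΔM_k|² · 1_{|ΔM_k| ≥ ε √v_n} | F_k ) → 0 in probability as n → ∞. -/

import Mathlib

open MeasureTheory ProbabilityTheory Filter Real
open scoped NNReal ENNReal Topology

/-!
Almost surely `1 ≤ I_n ≤ n - 1` for all `n`, and then every step of the walk has modulus one, so
`‖S_k‖ ≤ k` and `‖ΔM_k‖ ≤ 2 / ‖a_{k+1}‖`. It therefore suffices that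
`max_{k < n} 1 / ‖a_{k+1}‖² = o(v_n)`: for large `n` every indicator in the sum then vanishes
almost surely. Since `‖Φ₁‖ ≤ 1`, the sequence `k ‖a_{k+1}‖` is nondecreasing, which gives
`k / ‖a_{k+1}‖² ≤ 3 v_{k+1}`; since moreover `Re Φ₁ ≤ 1/2`, `‖a_{k+1}‖² ≤ 4k`, so `v_n` dominates
a quarter of the harmonic series and diverges.
-/

lemma pow_three_le_three_mul_sum_sq (k : ℕ) :
    (k : ℝ) ^ 3 ≤ 3 * ∑ i ∈ Finset.Icc 1 k, (i : ℝ) ^ 2 := by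
  induction k with
  | zero => simp
  | succ k ih =>
    rw [Finset.sum_Icc_succ_top (by omega)]
    push_cast
    nlinarith [(k.cast_nonneg : (0 : ℝ) ≤ k)]

lemma natCast_mul_le_three_mul_sum {b : ℕ → ℝ} (hb : ∀ k, 0 ≤ b k)
    (h : ∀ i k : ℕ, 1 ≤ i → i ≤ k → (i : ℝ) ^ 2 * b k ≤ k ^ 2 * b i) (k : ℕ) :
    k * b k ≤ 3 * ∑ i ∈ Finset.Icc 1 k, b i := by
  rcases Nat.eq_zero_or_pos k with rfl | hk
  · simp
  have hk2 : (0 : ℝ) < k ^ 2 := by positivity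
  refine le_of_mul_le_mul_left ?_ hk2
  calc (k : ℝ) ^ 2 * (k * b k) = k ^ 3 * b k := by ring
    _ ≤ 3 * ∑ i ∈ Finset.Icc 1 k, (i : ℝ) ^ 2 * b k := by
      rw [← Finset.sum_mul, ← mul_assoc]
      exact mul_le_mul_of_nonneg_right (pow_three_le_three_mul_sum_sq k) (hb k)
    _ ≤ 3 * ∑ i ∈ Finset.Icc 1 k, (k : ℝ) ^ 2 * b i := by
      gcongr 3 * ?_
      exact Finset.sum_le_sum fun i hi => h i k (Finset.mem_Icc.mp hi).1 (Finset.mem_Icc.mp hi).2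
    _ = k ^ 2 * (3 * ∑ i ∈ Finset.Icc 1 k, b i) := by rw [← Finset.mul_sum]; ring

lemma eventually_forall_le_mul_of_tendsto_atTop {b V : ℕ → ℝ} (hV : Monotone V)
    (hVtop : Tendsto V atTop atTop) (hb : ∀ η > 0, ∀ᶠ k in atTop, b k ≤ η * V k)
    {η : ℝ} (hη : 0 < η) : ∀ᶠ m in atTop, ∀ k ≤ m, b k ≤ η * V m := by
  obtain ⟨K, hK⟩ := eventually_atTop.mp (hb η hη)
  obtain ⟨B, hB⟩ := ((Set.finite_Iio K).image b).bddAbove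
  filter_upwards [hVtop.eventually_ge_atTop (B / η)] with m hm k hkm
  rcases lt_or_ge k K with hk | hk
  · calc b k ≤ B := hB ⟨k, hk, rfl⟩
      _ ≤ η * V m := by rwa [div_le_iff₀' hη] at hm
  · exact (hK k hk).trans (by gcongr; exact hV hkm)

lemma norm_le_of_norm_succ_sub_le {E : Type*} [SeminormedAddCommGroup E] {s : ℕ → E}
    (h0 : s 0 = 0) (hstep : ∀ n, ‖s (n + 1) - s n‖ ≤ 1) (n : ℕ) : ‖s n‖ ≤ n := by
  rw [← sub_zero (s n), ← h0, ← Finset.sum_range_sub]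
  simpa using norm_sum_le_of_le (Finset.range n) fun k _ => hstep k

section Probability

variable {Ω : Type*} [MeasurableSpace Ω] {P : Measure Ω}

lemma ae_mem_of_measure_eq_inv_card [IsProbabilityMeasure P] {β : Type*} [MeasurableSpace β]
    [MeasurableSingletonClass β] {X : Ω → β} (hX : Measurable X) {s : Finset β} (hs : s.Nonempty)
    (h : ∀ y ∈ s, P {ω | X ω = y} = (s.card : ℝ≥0∞)⁻¹) : ∀ᵐ ω ∂P, X ω ∈ s := by
  refine (mem_ae_iff_prob_eq_one (hX s.measurableSet)).mpr ?_
  rw [← sum_measure_preimage_singleton s fun y _ => hX (measurableSet_singleton y)]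
  calc ∑ y ∈ s, P (X ⁻¹' {y}) = ∑ _y ∈ s, (s.card : ℝ≥0∞)⁻¹ := Finset.sum_congr rfl h
    _ = 1 := by
      rw [Finset.sum_const, nsmul_eq_mul, ENNReal.mul_inv_cancel
        (Nat.cast_ne_zero.mpr hs.card_pos.ne') (ENNReal.natCast_ne_top _)]

lemma norm_integral_exp_I_mul_le_one [IsProbabilityMeasure P] (θ : Ω → ℝ) :
    ‖∫ ω, Complex.exp (Complex.I * θ ω) ∂P‖ ≤ 1 := by
  simpa using norm_integral_le_of_norm_le_const (μ := P)
    (Eventually.of_forall fun ω => (Complex.norm_exp_I_mul_ofReal (θ ω)).le)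

lemma condExp_indicator_eq_zero (m : MeasurableSpace Ω) {X : Ω → ℝ} {c : ℝ} (g : Ω → ℝ)
    (h : ∀ᵐ ω ∂P, X ω < c) : P[{ω | c ≤ X ω}.indicator g | m] =ᵐ[P] 0 := by
  have hzero : {ω | c ≤ X ω}.indicator g =ᵐ[P] 0 :=
    h.mono fun ω hω => Set.indicator_of_notMem (s := {ω | c ≤ X ω}) (not_le.mpr hω) g
  simpa using condExp_congr_ae (m := m) hzero

lemma measure_le_abs_mul_sum_eq_zero {ι : Type*} {s : Finset ι} {f : ι → Ω → ℝ}
    (hf : ∀ k ∈ s, f k =ᵐ[P] 0) {δ : ℝ} (hδ : 0 < δ) (a : ℝ) :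
    P {ω | δ ≤ |a * ∑ k ∈ s, f k ω|} = 0 := by
  have hsum : ∀ᵐ ω ∂P, |a * ∑ k ∈ s, f k ω| < δ := by
    filter_upwards [(eventually_all_finset s).mpr hf] with ω hω
    simpa [Finset.sum_eq_zero fun k hk => hω k hk] using hδ
  simpa only [not_lt] using ae_iff.mp hsum

end Probability

namespace ElephantRandomWalk

/-- `normalizer Φ k` is the paper's `a_{k+1}`. -/
noncomputable def normalizer (Φ : ℂ) (k : ℕ) : ℂ := ∏ j ∈ Finset.Icc 1 k, (1 + Φ / j)

variable {Φ : ℂ}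

@[simp]
lemma normalizer_zero : normalizer Φ 0 = 1 := by simp [normalizer]

lemma normalizer_succ (k : ℕ) :
    normalizer Φ (k + 1) = normalizer Φ k * (1 + Φ / (k + 1)) := by
  rw [normalizer, Finset.prod_Icc_succ_top (by omega)]
  push_cast
  rfl

lemma normalizer_eq_zero (h : 1 + Φ = 0) {k : ℕ} (hk : 1 ≤ k) : normalizer Φ k = 0 :=
  Finset.prod_eq_zero (Finset.mem_Icc.mpr ⟨le_rfl, hk⟩) (by simpa using h)

lemma monotone_natCast_mul_norm_normalizer (hΦ : ‖Φ‖ ≤ 1) :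
    Monotone fun k : ℕ => (k : ℝ) * ‖normalizer Φ k‖ := by
  refine monotone_nat_of_le_succ fun k => ?_
  have hk : (k : ℝ) ≤ ‖(k + 1 : ℂ) + Φ‖ := by
    have := norm_sub_norm_le ((k + 1 : ℂ)) (-Φ)
    rw [sub_neg_eq_add, norm_neg] at this
    have h : ‖(k + 1 : ℂ)‖ = k + 1 := by exact_mod_cast Complex.norm_natCast (k + 1)
    linarith
  have hfac : ((k + 1 : ℕ) : ℝ) * ‖1 + Φ / (k + 1)‖ = ‖(k + 1 : ℂ) + Φ‖ := by
    rw [← Complex.norm_natCast, ← norm_mul]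
    push_cast
    rw [mul_add, mul_one, mul_div_cancel₀ _ (by exact_mod_cast (k.succ_ne_zero))]
  calc (k : ℝ) * ‖normalizer Φ k‖ ≤ ‖(k + 1 : ℂ) + Φ‖ * ‖normalizer Φ k‖ := by gcongr
    _ = ((k + 1 : ℕ) : ℝ) * ‖normalizer Φ (k + 1)‖ := by
      rw [normalizer_succ, norm_mul, ← hfac]
      ring

lemma normalizer_ne_zero (hΦ : ‖Φ‖ ≤ 1) (h : 1 + Φ ≠ 0) (k : ℕ) : normalizer Φ k ≠ 0 := by
  rcases Nat.eq_zero_or_pos k with rfl | hk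
  · simp
  have := monotone_natCast_mul_norm_normalizer hΦ hk
  have h1 : normalizer Φ 1 = 1 + Φ := by simp [normalizer]
  simp only [Nat.cast_one, one_mul, h1] at this
  intro h0
  rw [h0, norm_zero, mul_zero] at this
  exact h (norm_le_zero_iff.mp this)

lemma sq_mul_inv_norm_normalizer_sq_le (hΦ : ‖Φ‖ ≤ 1) (h : 1 + Φ ≠ 0) {i k : ℕ} (hik : i ≤ k) :
    (i : ℝ) ^ 2 * (1 / ‖normalizer Φ k‖ ^ 2) ≤ k ^ 2 * (1 / ‖normalizer Φ i‖ ^ 2) := by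
  have hi := norm_pos_iff.mpr (normalizer_ne_zero hΦ h i)
  have hk := norm_pos_iff.mpr (normalizer_ne_zero hΦ h k)
  have hmono := monotone_natCast_mul_norm_normalizer hΦ hik
  simp only at hmono
  rw [mul_one_div, mul_one_div, div_le_div_iff₀ (by positivity) (by positivity), ← mul_pow,
    ← mul_pow]
  gcongr

lemma norm_one_add_div_sq_le (hΦ : ‖Φ‖ ≤ 1) (hre : Φ.re ≤ 1 / 2) {x : ℝ} (hx : 0 < x) :
    ‖1 + Φ / x‖ ^ 2 ≤ 1 + 1 / x + 1 / x ^ 2 := by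
  have hsq : Φ.re ^ 2 + Φ.im ^ 2 ≤ 1 := by
    have := pow_le_one₀ (norm_nonneg Φ) hΦ (n := 2)
    rwa [Complex.sq_norm, Complex.normSq_apply, ← sq, ← sq] at this
  rw [Complex.sq_norm, Complex.normSq_apply]
  simp only [Complex.add_re, Complex.add_im, Complex.one_re, Complex.one_im, Complex.div_ofReal_re,
    Complex.div_ofReal_im]
  have : (1 + Φ.re / x) * (1 + Φ.re / x) + (0 + Φ.im / x) * (0 + Φ.im / x)
      = 1 + 2 * Φ.re / x + (Φ.re ^ 2 + Φ.im ^ 2) / x ^ 2 := by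
    field_simp; ring
  rw [this]
  gcongr
  linarith

lemma norm_normalizer_sq_le (hΦ : ‖Φ‖ ≤ 1) (hre : Φ.re ≤ 1 / 2) (k : ℕ) :
    ‖normalizer Φ k‖ ^ 2 ≤ 3 * k + 1 / (k + 1) := by
  induction k with
  | zero => simp
  | succ k ih =>
    -- `3 * k + 1` alone is not inductive: the `1 / (k + 1)` absorbs the `1 / k ^ 2` of the factor.
    have hfac := norm_one_add_div_sq_le hΦ hre (x := k + 1) (by positivity)
    push_cast at hfac ⊢
    rw [normalizer_succ, norm_mul, mul_pow]
    calc ‖normalizer Φ k‖ ^ 2 * ‖1 + Φ / (k + 1)‖ ^ 2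
        ≤ (3 * k + 1 / (k + 1)) * (1 + 1 / (k + 1) + 1 / (k + 1) ^ 2) := by gcongr
      _ ≤ 3 * ((k : ℝ) + 1) + 1 / (k + 1 + 1) := by
        field_simp
        nlinarith [sq_nonneg (k : ℝ)]

lemma tendsto_sum_inv_norm_normalizer_sq (hΦ : ‖Φ‖ ≤ 1) (hre : Φ.re ≤ 1 / 2) (h : 1 + Φ ≠ 0) :
    Tendsto (fun m => ∑ k ∈ Finset.Icc 1 m, 1 / ‖normalizer Φ k‖ ^ 2) atTop atTop := by
  have hterm (k : ℕ) (hk : 1 ≤ k) : (4 : ℝ)⁻¹ * (k : ℝ)⁻¹ ≤ 1 / ‖normalizer Φ k‖ ^ 2 := by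
    have hk1 : (1 : ℝ) ≤ k := by exact_mod_cast hk
    have hA := norm_pos_iff.mpr (normalizer_ne_zero hΦ h k)
    have hle := norm_normalizer_sq_le hΦ hre k
    have : 1 / ((k : ℝ) + 1) ≤ k := by
      rw [div_le_iff₀ (by positivity)]; nlinarith
    rw [← mul_inv, ← one_div]
    exact one_div_le_one_div_of_le (by positivity) (by linarith)
  have hlog : ∀ m : ℕ, (4 : ℝ)⁻¹ * Real.log (m + 1) ≤
      ∑ k ∈ Finset.Icc 1 m, 1 / ‖normalizer Φ k‖ ^ 2 := by
    intro m
    calc (4 : ℝ)⁻¹ * Real.log (m + 1) ≤ (4 : ℝ)⁻¹ * harmonic m := by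
          gcongr; exact_mod_cast log_add_one_le_harmonic m
      _ = ∑ k ∈ Finset.Icc 1 m, (4 : ℝ)⁻¹ * (k : ℝ)⁻¹ := by
          simp [harmonic_eq_sum_Icc, Finset.mul_sum]
      _ ≤ _ := Finset.sum_le_sum fun k hk => hterm k (Finset.mem_Icc.mp hk).1
  refine tendsto_atTop_mono hlog (Tendsto.const_mul_atTop (by norm_num) ?_)
  exact Real.tendsto_log_atTop.comp (tendsto_atTop_add_const_right _ 1 tendsto_natCast_atTop_atTop)

lemma eventually_inv_norm_normalizer_sq_le (hΦ : ‖Φ‖ ≤ 1) (hre : Φ.re ≤ 1 / 2) (h : 1 + Φ ≠ 0)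
    {η : ℝ} (hη : 0 < η) :
    ∀ᶠ m in atTop, ∀ k ≤ m,
      1 / ‖normalizer Φ k‖ ^ 2 ≤ η * ∑ i ∈ Finset.Icc 1 m, 1 / ‖normalizer Φ i‖ ^ 2 := by
  have hb (k : ℕ) : 0 ≤ 1 / ‖normalizer Φ k‖ ^ 2 := by positivity
  have hmono : Monotone fun m => ∑ i ∈ Finset.Icc 1 m, 1 / ‖normalizer Φ i‖ ^ 2 :=
    fun m m' hm => Finset.sum_le_sum_of_subset_of_nonneg (Finset.Icc_subset_Icc_right hm)
      fun i _ _ => hb i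
  refine eventually_forall_le_mul_of_tendsto_atTop hmono
    (tendsto_sum_inv_norm_normalizer_sq hΦ hre h) (fun η hη => ?_) hη
  filter_upwards [eventually_ge_atTop ⌈3 / η⌉₊] with k hk
  have hkη : 3 ≤ η * k := by
    rw [← div_le_iff₀' hη]; exact (Nat.ceil_le.mp hk)
  have := natCast_mul_le_three_mul_sum hb
    (fun i k _ hik => sq_mul_inv_norm_normalizer_sq_le hΦ h hik) k
  nlinarith [hb k]

lemma eventually_two_div_norm_normalizer_lt (hΦ : ‖Φ‖ ≤ 1) (hre : Φ.re ≤ 1 / 2) (h : 1 + Φ ≠ 0)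
    {ε : ℝ} (hε : 0 < ε) :
    ∀ᶠ m in atTop, ∀ k ≤ m,
      2 / ‖normalizer Φ k‖ < ε * √(∑ i ∈ Finset.Icc 1 m, 1 / ‖normalizer Φ i‖ ^ 2) := by
  filter_upwards [eventually_inv_norm_normalizer_sq_le hΦ hre h (η := ε ^ 2 / 8) (by positivity),
    (tendsto_sum_inv_norm_normalizer_sq hΦ hre h).eventually_gt_atTop 0] with m hle hpos k hk
  refine lt_of_pow_lt_pow_left₀ 2 (by positivity) ?_
  rw [div_pow, mul_pow, sq_sqrt hpos.le, div_eq_mul_one_div (2 ^ 2)]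
  nlinarith [hle k hk, mul_pos (pow_pos hε 2) hpos]

lemma norm_succ_sub_eq_one {s : ℕ → ℂ} {i : ℕ → ℕ} {e : ℕ → ℂ} (h0 : s 0 = 0) (h1 : s 1 = 1)
    (he : ∀ n, ‖e n‖ = 1) (hi : ∀ n, 2 ≤ n → i n ∈ Finset.Icc 1 (n - 1))
    (hrec : ∀ n, 2 ≤ n → s n = s (n - 1) + (s (i n) - s (i n - 1)) * e n) (n : ℕ) :
    ‖s (n + 1) - s n‖ = 1 := by
  induction n using Nat.strong_induction_on with
  | _ n ih =>
    rcases n with _ | n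
    · simp [h0, h1]
    obtain ⟨hi1, hin⟩ := Finset.mem_Icc.mp (hi (n + 2) (by omega))
    obtain ⟨l, hl⟩ : ∃ l, i (n + 2) = l + 1 := ⟨i (n + 2) - 1, by omega⟩
    rw [hrec (n + 2) (by omega), show n + 2 - 1 = n + 1 from rfl, add_sub_cancel_left, norm_mul,
      he, mul_one, hl, Nat.add_sub_cancel]
    exact ih l (by omega)

lemma ae_norm_succ_sub_eq_one {Ω : Type*} [MeasurableSpace Ω] {P : Measure Ω}
    [IsProbabilityMeasure P] {θ : ℕ → Ω → ℝ} {I : ℕ → Ω → ℕ} {S : ℕ → Ω → ℂ}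
    (hImeas : ∀ n, Measurable (I n))
    (hIunif : ∀ n, 2 ≤ n → ∀ k, 1 ≤ k → k ≤ n - 1 → P {ω | I n ω = k} = ((n : ℝ≥0∞) - 1)⁻¹)
    (hS0 : ∀ ω, S 0 ω = 0) (hS1 : ∀ ω, S 1 ω = 1)
    (hSrec : ∀ n, 2 ≤ n → ∀ ω,
      S n ω = S (n - 1) ω + (S (I n ω) ω - S (I n ω - 1) ω) * Complex.exp (Complex.I * θ n ω)) :
    ∀ᵐ ω ∂P, ∀ n, ‖S (n + 1) ω - S n ω‖ = 1 := by
  have hI : ∀ᵐ ω ∂P, ∀ n, 2 ≤ n → I n ω ∈ Finset.Icc 1 (n - 1) := by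
    refine ae_all_iff.mpr fun n => ?_
    by_cases hn : 2 ≤ n
    · refine (ae_mem_of_measure_eq_inv_card (hImeas n) ⟨1, by simp; omega⟩ fun k hk => ?_).mono
        fun ω hω _ => hω
      obtain ⟨hk1, hkn⟩ := Finset.mem_Icc.mp hk
      rw [hIunif n hn k hk1 hkn, Nat.card_Icc, Nat.add_sub_cancel, ENNReal.natCast_sub,
        Nat.cast_one]
    · exact Eventually.of_forall fun ω h => absurd h hn
  filter_upwards [hI] with ω hω
  exact norm_succ_sub_eq_one (hS0 ω) (hS1 ω) (fun n => Complex.norm_exp_I_mul_ofReal (θ n ω)) hω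
    fun n hn => hSrec n hn ω

lemma norm_sub_div_normalizer_le (hΦ : ‖Φ‖ ≤ 1) {s : ℕ → ℂ} (h0 : s 0 = 0)
    (hstep : ∀ n, ‖s (n + 1) - s n‖ ≤ 1) {k : ℕ} (hk : 1 ≤ k) (hA : normalizer Φ k ≠ 0) :
    ‖s (k + 1) / normalizer Φ k - s k / normalizer Φ (k - 1)‖ ≤ 2 / ‖normalizer Φ k‖ := by
  obtain ⟨j, rfl⟩ : ∃ j, k = j + 1 := ⟨k - 1, by omega⟩
  obtain ⟨c, hc⟩ : ∃ c, c = 1 + Φ / (j + 1) := ⟨_, rfl⟩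
  have hsucc : normalizer Φ (j + 1) = normalizer Φ j * c := hc ▸ normalizer_succ j
  have hA' : normalizer Φ j ≠ 0 := left_ne_zero_of_mul (hsucc ▸ hA)
  have hc0 : c ≠ 0 := right_ne_zero_of_mul (hsucc ▸ hA)
  have hΔ : s (j + 2) / normalizer Φ (j + 1) - s (j + 1) / normalizer Φ j
      = (s (j + 2) - s (j + 1) - Φ / (j + 1) * s (j + 1)) / normalizer Φ (j + 1) := by
    rw [show Φ / (j + 1) = c - 1 by rw [hc]; ring, hsucc]
    field_simp
    ring
  have hdrift : ‖Φ / (j + 1) * s (j + 1)‖ ≤ 1 := by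
    rw [norm_mul, norm_div, show ((j : ℂ) + 1) = ((j + 1 : ℕ) : ℂ) by push_cast; rfl,
      Complex.norm_natCast]
    calc ‖Φ‖ / ((j + 1 : ℕ) : ℝ) * ‖s (j + 1)‖ ≤ 1 / ((j + 1 : ℕ) : ℝ) * ((j + 1 : ℕ) : ℝ) := by
          gcongr; exact norm_le_of_norm_succ_sub_le h0 hstep _
      _ = 1 := by field_simp
  rw [Nat.add_sub_cancel, hΔ, norm_div]
  gcongr
  exact (norm_sub_le _ _).trans (by linarith [hstep (j + 1)])

end ElephantRandomWalk

open ElephantRandomWalk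

theorem erw_lindeberg_condition_general
    {Ω : Type*} [m : MeasurableSpace Ω] (P : Measure Ω) [IsProbabilityMeasure P]
    (θ : ℕ → Ω → ℝ) (I : ℕ → Ω → ℕ) (S : ℕ → Ω → ℂ)
    (hImeas : ∀ n, Measurable (I n))
    (hIunif : ∀ n, 2 ≤ n → ∀ k, 1 ≤ k → k ≤ n - 1 →
      P {ω | I n ω = k} = ((n : ℝ≥0∞) - 1)⁻¹)
    (hS0 : ∀ ω, S 0 ω = 0) (hS1 : ∀ ω, S 1 ω = 1)
    (hSrec : ∀ n, 2 ≤ n → ∀ ω,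
      S n ω = S (n - 1) ω + (S (I n ω) ω - S (I n ω - 1) ω) * Complex.exp (Complex.I * θ n ω))
    (Φ₁ : ℂ) (hΦ₁ : Φ₁ = ∫ ω, Complex.exp (Complex.I * θ 1 ω) ∂P)
    (hsub : Φ₁.re < 1 / 2)
    (M : ℕ → Ω → ℂ)
    (hM : ∀ n ω, M n ω = S n ω / ∏ j ∈ Finset.Icc 1 (n - 1), (1 + Φ₁ / (j : ℂ)))
    (𝔉 : ℕ → MeasurableSpace Ω)
    (v : ℕ → ℝ)
    (hv : ∀ n, v n =
      ∑ k ∈ Finset.Icc 1 (n - 1), 1 / ‖∏ j ∈ Finset.Icc 1 k, (1 + Φ₁ / (j : ℂ))‖ ^ 2) :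
    ∀ ε > 0, ∀ δ > 0, Tendsto
      (fun n : ℕ =>
        P {ω | δ ≤ |(1 / v n) *
          ∑ k ∈ Finset.Icc 1 (n - 1),
            (P[Set.indicator {ω' | ε * Real.sqrt (v n) ≤ ‖M (k + 1) ω' - M k ω'‖}
                (fun ω' => ‖M (k + 1) ω' - M k ω'‖ ^ 2)|𝔉 k]) ω|})
      atTop (𝓝 0) := by
  intro ε hε δ hδ
  have hM' (n : ℕ) (ω : Ω) : M n ω = S n ω / normalizer Φ₁ (n - 1) := hM n ω
  have hv' (n : ℕ) : v n = ∑ k ∈ Finset.Icc 1 (n - 1), 1 / ‖normalizer Φ₁ k‖ ^ 2 := hv n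
  refine tendsto_const_nhds.congr' ?_
  by_cases hdeg : 1 + Φ₁ = 0
  · -- here `v n = 0`, so `1 / v n = 0`
    have hv0 (n : ℕ) : v n = 0 := by
      rw [hv']
      exact Finset.sum_eq_zero fun k hk => by
        simp [normalizer_eq_zero hdeg (Finset.mem_Icc.mp hk).1]
    refine Eventually.of_forall fun n => ?_
    simp [hv0, not_le.mpr hδ]
  have hΦ : ‖Φ₁‖ ≤ 1 := hΦ₁ ▸ norm_integral_exp_I_mul_le_one (θ 1)
  have hstep := ae_norm_succ_sub_eq_one (P := P) hImeas hIunif hS0 hS1 hSrec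
  filter_upwards [(tendsto_sub_atTop_nat 1).eventually
    (eventually_two_div_norm_normalizer_lt hΦ hsub.le hdeg hε)] with n hn
  refine (measure_le_abs_mul_sum_eq_zero (fun k hk => condExp_indicator_eq_zero _ _ ?_) hδ _).symm
  obtain ⟨hk1, hkn⟩ := Finset.mem_Icc.mp hk
  filter_upwards [hstep] with ω hω
  rw [hM', hM', hv', Nat.add_sub_cancel]
  exact (norm_sub_div_normalizer_le (s := (S · ω)) hΦ (hS0 ω) (fun n => (hω n).le) hk1
    (normalizer_ne_zero hΦ hdeg k)).trans_lt (hn k hkn)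

/-- Lindeberg's condition for the normalized planar ERW `M_n = S_n / a_n` when
`Re Φ₁ < 1/2`: with `v_n = ∑_{k=1}^{n-1} 1/|a_{k+1}|²`, for every `ε > 0`,
`(1/v_n) ∑_{k=1}^{n-1} E(|ΔM_k|² 1_{|ΔM_k| ≥ ε √v_n} | F_k) → 0` in probability. -/
theorem erw_lindeberg_condition
    {Ω : Type*} [m : MeasurableSpace Ω] (P : Measure Ω) [IsProbabilityMeasure P]
    (θ : ℕ → Ω → ℝ) (I : ℕ → Ω → ℕ) (S : ℕ → Ω → ℂ)
    (hθmeas : ∀ n, Measurable (θ n)) (hImeas : ∀ n, Measurable (I n))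
    (hθrange : ∀ n ω, θ n ω ∈ Set.Ico 0 (2 * π))
    (hθident : ∀ n, 1 ≤ n → IdentDistrib (θ n) (θ 1) P P)
    (hindep : iIndepFun
      (Sum.elim (fun n => θ n) (fun n ω => (I n ω : ℝ))) P)
    (hIunif : ∀ n, 2 ≤ n → ∀ k, 1 ≤ k → k ≤ n - 1 →
      P {ω | I n ω = k} = ((n : ℝ≥0∞) - 1)⁻¹)
    (hS0 : ∀ ω, S 0 ω = 0) (hS1 : ∀ ω, S 1 ω = 1)
    (hSrec : ∀ n, 2 ≤ n → ∀ ω,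
      S n ω = S (n - 1) ω + (S (I n ω) ω - S (I n ω - 1) ω) * Complex.exp (Complex.I * θ n ω))
    (hnd : P {ω | θ 1 ω = 0 ∨ θ 1 ω = π} < 1)
    (Φ₁ : ℂ) (hΦ₁ : Φ₁ = ∫ ω, Complex.exp (Complex.I * θ 1 ω) ∂P)
    (hsub : Φ₁.re < 1 / 2)
    (M : ℕ → Ω → ℂ)
    (hM : ∀ n ω, M n ω = S n ω / ∏ j ∈ Finset.Icc 1 (n - 1), (1 + Φ₁ / (j : ℂ)))
    (𝔉 : ℕ → MeasurableSpace Ω)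
    (h𝔉 : ∀ n, 𝔉 n = ⨆ i ∈ Set.Icc 1 n, MeasurableSpace.comap (S i) inferInstance)
    (v : ℕ → ℝ)
    (hv : ∀ n, v n =
      ∑ k ∈ Finset.Icc 1 (n - 1), 1 / ‖∏ j ∈ Finset.Icc 1 k, (1 + Φ₁ / (j : ℂ))‖ ^ 2) :
    ∀ ε > 0, ∀ δ > 0, Tendsto
      (fun n : ℕ =>
        P {ω | δ ≤ |(1 / v n) *
          ∑ k ∈ Finset.Icc 1 (n - 1),
            (P[Set.indicator {ω' | ε * Real.sqrt (v n) ≤ ‖M (k + 1) ω' - M k ω'‖}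
                (fun ω' => ‖M (k + 1) ω' - M k ω'‖ ^ 2)|𝔉 k]) ω|})
      atTop (𝓝 0) :=
  erw_lindeberg_condition_general (m := m) P θ I S hImeas hIunif hS0 hS1 hSrec Φ₁ hΦ₁ hsub M hM 𝔉 v
    hv
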